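/- arXiv:2003.08157 — 3 statements merged into one kernel-verified Lean document; each statement's English description precedes it below -/
import Mathlib

section
/- Let χ : Cl_F^+(𝔤) → ℂ^× be a primitive finite Hecke character of conductor 𝔤 (it does not factor through Cl_F^+(𝔤') for any 𝔤' ⊋ 𝔤). If ξ ∈ 𝕋^𝔞[𝔤] is a non-primitive torsion point (ξ factors through 𝔞/𝔤'𝔞 for some 𝔤' ⊋ 𝔤), then c_χ(ξ) = 0, where c_χ(ξ) := N𝔤^{-1} ∑_{β ∈ 𝔞/𝔤𝔞} χ_𝔞(β) ξ(-β). -/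
open scoped nonZeroDivisors
open NumberField FractionalIdeal

def IsTotPos (F : Type*) [Field F] (x : F) : Prop := ∀ τ : F →+* ℝ, 0 < τ x

/-!
Primitivity of `χ` yields a totally positive `y ≡ 1 mod 𝔤'`, prime to `𝔤`, with
`χ(y) ≠ 1`. Multiplication by `y` permutes `𝔞/𝔤𝔞`; it fixes `ξ(-β)` because `ξ` factors through
`𝔞/𝔤'𝔞`, and it multiplies `χ_𝔞(β)` by `χ(y)`. Hence the sum `S` satisfies `S = χ(y) S`, so `S = 0`.
-/

theorem Submodule.mem_of_smul_mem_of_isCoprime {R M : Type*} [CommRing R] [AddCommGroup M]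
    [Module R M] {I : Ideal R} {N : Submodule R M} {y : R} {d : M}
    (hy : IsCoprime (Ideal.span {y}) I) (hyd : y • d ∈ N) (hId : ∀ i ∈ I, i • d ∈ N) :
    d ∈ N := by
  obtain ⟨_, hi, j, hj, hij⟩ := Ideal.isCoprime_iff_exists.1 hy
  obtain ⟨t, rfl⟩ := Ideal.mem_span_singleton'.1 hi
  have hd : d = t • y • d + j • d := by rw [smul_smul, ← add_smul, hij, one_smul]
  rw [hd]
  exact N.add_mem (N.smul_mem t hyd) (hId j hj)

theorem Finset.sum_comp_eq_sum_of_isTransversal {G R : Type*} [AddCommGroup G] [AddCommMonoid R]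
    {M N : AddSubgroup G} {B : Finset G} (hBM : ∀ b ∈ B, b ∈ M)
    (hB : ∀ a ∈ M, ∃! b, b ∈ B ∧ a - b ∈ N) {f : G → R} (hf : ∀ x ∈ M, ∀ d ∈ N, f (x + d) = f x)
    {e : G → G} (he : ∀ x ∈ M, e x ∈ M) (he_inj : ∀ x ∈ M, ∀ x' ∈ M, e x - e x' ∈ N → x - x' ∈ N) :
    ∑ b ∈ B, f (e b) = ∑ b ∈ B, f b := by
  choose σ hσB hσN using fun b (hb : b ∈ B) => (hB (e b) (he b (hBM b hb))).exists
  have σ_inj : ∀ b₁ h₁ b₂ h₂, σ b₁ h₁ = σ b₂ h₂ → b₁ = b₂ := by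
    intro b₁ h₁ b₂ h₂ h
    have he₁₂ : e b₁ - e b₂ ∈ N := by
      simpa [h] using N.sub_mem (hσN b₁ h₁) (hσN b₂ h₂)
    exact (hB b₁ (hBM b₁ h₁)).unique ⟨h₁, by simp⟩
      ⟨h₂, he_inj _ (hBM b₁ h₁) _ (hBM b₂ h₂) he₁₂⟩
  refine Finset.sum_bij σ hσB σ_inj (fun b hb => ?_) (fun b hb => ?_)
  · obtain ⟨a, ha, rfl⟩ := Finset.surj_on_of_inj_on_of_card_le σ hσB
      (fun a₁ a₂ h₁ h₂ => σ_inj a₁ h₁ a₂ h₂) le_rfl b hb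
    exact ⟨a, ha, rfl⟩
  · simpa using hf _ (hBM _ (hσB b hb)) _ (hσN b hb)

theorem FractionalIdeal.algebraMap_mul_mem {R P : Type*} [CommRing R] {S : Submonoid R}
    [CommRing P] [Algebra R P] {I : FractionalIdeal S P} (r : R) {x : P} (hx : x ∈ I) :
    algebraMap R P r * x ∈ I := by
  rw [← Algebra.smul_def]
  exact Submodule.smul_mem (I : Submodule R P) r hx

section

variable {R P : Type*} [CommRing R] {S : Submonoid R} [CommRing P] [Algebra R P]
  {𝔞 : FractionalIdeal S P} {𝔟 : Ideal R}

theorem FractionalIdeal.apply_algebraMap_mul_of_sub_one_mem {α : Type*} {ξ : P → α}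
    (hξ : ∀ x ∈ 𝔞, ∀ γ ∈ (𝔟 : FractionalIdeal S P) * 𝔞, ξ (x + γ) = ξ x) {y : R}
    (hy : y - 1 ∈ 𝔟) {x : P} (hx : x ∈ 𝔞) : ξ (algebraMap R P y * x) = ξ x := by
  rw [← hξ x hx _ (mul_mem_mul (mem_coeIdeal_of_mem _ hy) hx), map_sub, map_one]
  congr 1
  ring

theorem FractionalIdeal.sum_algebraMap_mul_eq_sum_of_isCoprime {M : Type*} [AddCommMonoid M]
    {B : Finset P} (hB𝔞 : ∀ b ∈ B, b ∈ 𝔞)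
    (hB : ∀ x ∈ 𝔞, ∃! b, b ∈ B ∧ x - b ∈ (𝔟 : FractionalIdeal S P) * 𝔞) {f : P → M}
    (hf : ∀ x ∈ 𝔞, ∀ d ∈ (𝔟 : FractionalIdeal S P) * 𝔞, f (x + d) = f x) {y : R}
    (hy : IsCoprime (Ideal.span {y}) 𝔟) :
    ∑ b ∈ B, f (algebraMap R P y * b) = ∑ b ∈ B, f b := by
  refine Finset.sum_comp_eq_sum_of_isTransversal (M := (𝔞 : Submodule R P).toAddSubgroup)
    (N := (((𝔟 : FractionalIdeal S P) * 𝔞 : FractionalIdeal S P) : Submodule R P).toAddSubgroup)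
    hB𝔞 hB hf (fun x hx => algebraMap_mul_mem y hx) fun x hx x' hx' h => ?_
  refine Submodule.mem_of_smul_mem_of_isCoprime hy ?_ fun i hi => ?_
  · rwa [smul_sub, Algebra.smul_def, Algebra.smul_def]
  · rw [Algebra.smul_def]
    exact mul_mem_mul (mem_coeIdeal_of_mem _ hi) (Submodule.sub_mem _ hx hx')

end

theorem FractionalIdeal.exists_pos_natCast_mem {R K : Type*} [CommRing R] [IsDedekindDomain R]
    [Module.Free ℤ R] [Module.Finite ℤ R] [Field K] [Algebra R K] [IsFractionRing R K]
    {J : FractionalIdeal R⁰ K} (hJ : J ≠ 0) : ∃ q : ℕ, 0 < q ∧ (q : K) ∈ J := by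
  obtain ⟨x, hx0, hxJ⟩ := exists_ne_zero_mem_isInteger hJ
  obtain ⟨t, ht⟩ := Ideal.mem_span_singleton'.1 (Ideal.absNorm_mem (Ideal.span {x}))
  have hq : ((Ideal.absNorm (Ideal.span {x}) : ℕ) : K) = algebraMap R K t * algebraMap R K x := by
    rw [← map_mul, ht, map_natCast]
  refine ⟨_, Nat.pos_of_ne_zero ?_, hq ▸ algebraMap_mul_mem t hxJ⟩
  rwa [Ne, Ideal.absNorm_eq_zero_iff, Ideal.span_singleton_eq_bot]

theorem IsTotPos.mul {F : Type*} [Field F] {x y : F} (hx : IsTotPos F x) (hy : IsTotPos F y) :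
    IsTotPos F (x * y) := fun τ => by
  simpa only [map_mul] using mul_pos (hx τ) (hy τ)

theorem FractionalIdeal.exists_isTotPos_add_mem {F : Type*} [Field F] [NumberField F]
    {J : FractionalIdeal (𝓞 F)⁰ F} (hJ : J ≠ 0) (x : F) : ∃ γ ∈ J, IsTotPos F (x + γ) := by
  obtain ⟨q, hq, hqJ⟩ := exists_pos_natCast_mem hJ
  obtain ⟨C, hC⟩ := Finite.bddAbove_range fun τ : F →+* ℝ => -τ x
  obtain ⟨n, hn⟩ := exists_nat_gt C
  refine ⟨algebraMap (𝓞 F) F n * q, algebraMap_mul_mem _ hqJ, fun τ => ?_⟩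
  have hτ : -τ x ≤ C := hC ⟨τ, rfl⟩
  have hnq : (n : ℝ) ≤ n * q := le_mul_of_one_le_right n.cast_nonneg (Nat.one_le_cast.2 hq)
  simp only [map_add, map_mul, map_natCast]
  linarith

theorem FractionalIdeal.exists_coeIdeal_eq_inv_mul_spanSingleton {R K : Type*} [CommRing R]
    [IsDedekindDomain R] [Field K] [Algebra R K] [IsFractionRing R K]
    {𝔞 : FractionalIdeal R⁰ K} (h𝔞 : 𝔞 ≠ 0) {α : K} (hα : α ∈ 𝔞) :
    ∃ I : Ideal R, (I : FractionalIdeal R⁰ K) = 𝔞⁻¹ * spanSingleton R⁰ α := by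
  refine le_one_iff_exists_coeIdeal.1 ?_
  calc 𝔞⁻¹ * spanSingleton R⁰ α ≤ 𝔞⁻¹ * 𝔞 := by gcongr; exact spanSingleton_le_iff_mem.2 hα
    _ = 1 := inv_mul_cancel₀ h𝔞

/-- Shift `β` by an element of `J` to a totally positive element, where both sides are values of
`χ` on integral ideals. -/
theorem apply_mul_eq_of_isTotPos {F : Type*} [Field F] [NumberField F]
    {𝔞 J : FractionalIdeal (𝓞 F)⁰ F} (h𝔞 : 𝔞 ≠ 0) (hJ : J ≠ 0) (hJ𝔞 : J ≤ 𝔞)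
    {χ : Ideal (𝓞 F) → ℂ} (hχmul : ∀ I J, χ (I * J) = χ I * χ J)
    {χa : F → ℂ} (hχaper : ∀ α γ : F, γ ∈ J → χa (α + γ) = χa α)
    (hχaval : ∀ α ∈ 𝔞, IsTotPos F α → ∀ I : Ideal (𝓞 F),
      (I : FractionalIdeal (𝓞 F)⁰ F) = 𝔞⁻¹ * spanSingleton (𝓞 F)⁰ α → χa α = χ I)
    {y : 𝓞 F} (hy : IsTotPos F y) {β : F} (hβ : β ∈ 𝔞) :
    χa (y * β) = χ (Ideal.span {y}) * χa β := by
  obtain ⟨γ, hγJ, hα⟩ := exists_isTotPos_add_mem hJ β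
  have hα𝔞 : β + γ ∈ 𝔞 := Submodule.add_mem (𝔞 : Submodule (𝓞 F) F) hβ (hJ𝔞 hγJ)
  obtain ⟨I, hI⟩ := exists_coeIdeal_eq_inv_mul_spanSingleton h𝔞 hα𝔞
  have hyI : ((I * Ideal.span {y} : Ideal (𝓞 F)) : FractionalIdeal (𝓞 F)⁰ F) =
      𝔞⁻¹ * spanSingleton (𝓞 F)⁰ (y * (β + γ)) := by
    rw [coeIdeal_mul, hI, coeIdeal_span_singleton, ← spanSingleton_mul_spanSingleton]
    ring
  calc χa (y * β) = χa (y * (β + γ)) := by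
        rw [mul_add]
        exact (hχaper _ _ (algebraMap_mul_mem y hγJ)).symm
    _ = χ I * χ (Ideal.span {y}) := by
        rw [hχaval _ (algebraMap_mul_mem y hα𝔞) (hy.mul hα) _ hyI, hχmul]
    _ = χ (Ideal.span {y}) * χa β := by
        rw [← hχaval _ hα𝔞 hα I hI, hχaper _ _ hγJ, mul_comm]

theorem c_chi_vanishes_at_nonprimitive_torsion_general
    (F : Type*) [Field F] [NumberField F]
    (𝔤 : Ideal (𝓞 F)) (h𝔤 : 𝔤 ≠ ⊥)
    (𝔞 : FractionalIdeal (𝓞 F)⁰ F) (h𝔞 : 𝔞 ≠ 0)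
    -- `χ`, a finite Hecke character mod `𝔤` on ideals, extended by zero:
    (χ : Ideal (𝓞 F) → ℂ)
    (hχmul : ∀ I J, χ (I * J) = χ I * χ J)
    -- primitivity of `χ`: it does not factor through any `Cl_F^+(𝔤'')`, `𝔤'' ⊋ 𝔤`:
    (hχprim : ∀ 𝔤'' : Ideal (𝓞 F), 𝔤 < 𝔤'' →
      ¬ ∀ y : 𝓞 F, IsTotPos F (y : F) → y - 1 ∈ 𝔤'' → IsCoprime (Ideal.span {y}) 𝔤 →
        χ (Ideal.span {y}) = 1)
    -- the induced function `χ_𝔞 : 𝔞/𝔤𝔞 → ℂ`: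
    (χa : F → ℂ)
    (hχaper : ∀ α γ : F, γ ∈ (𝔤 : FractionalIdeal (𝓞 F)⁰ F) * 𝔞 → χa (α + γ) = χa α)
    (hχaval : ∀ α ∈ 𝔞, IsTotPos F α → ∀ I : Ideal (𝓞 F),
      (I : FractionalIdeal (𝓞 F)⁰ F) = 𝔞⁻¹ * spanSingleton (𝓞 F)⁰ α → χa α = χ I)
    -- `ξ`, a `𝔤`-torsion point of `𝕋^𝔞` which is non-primitive: it factors through
    -- `𝔞/𝔤'𝔞` for some `𝔤' ⊋ 𝔤`:
    (ξ : F → ℂ)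
    (hξper : ∀ α ∈ 𝔞, ∀ γ ∈ (𝔤 : FractionalIdeal (𝓞 F)⁰ F) * 𝔞, ξ (α + γ) = ξ α)
    (𝔤' : Ideal (𝓞 F)) (h𝔤' : 𝔤 < 𝔤')
    (hξnonprim : ∀ α ∈ 𝔞, ∀ γ ∈ (𝔤' : FractionalIdeal (𝓞 F)⁰ F) * 𝔞, ξ (α + γ) = ξ α)
    -- a set of representatives `B` of `𝔞/𝔤𝔞`:
    (B : Finset F)
    (hB1 : ∀ β ∈ B, β ∈ 𝔞)
    (hB2 : ∀ α ∈ 𝔞, ∃! β, β ∈ B ∧ α - β ∈ (𝔤 : FractionalIdeal (𝓞 F)⁰ F) * 𝔞) :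
    ((Ideal.absNorm 𝔤 : ℂ))⁻¹ * ∑ β ∈ B, χa β * ξ (-β) = 0 := by
  obtain ⟨y, hy_pos, hy_mod, hy_cop, hχy⟩ : ∃ y : 𝓞 F, IsTotPos F y ∧ y - 1 ∈ 𝔤' ∧
      IsCoprime (Ideal.span {y}) 𝔤 ∧ χ (Ideal.span {y}) ≠ 1 := by
    simpa using hχprim 𝔤' h𝔤'
  have hJ : (𝔤 : FractionalIdeal (𝓞 F)⁰ F) * 𝔞 ≠ 0 := mul_ne_zero (coeIdeal_ne_zero.2 h𝔤) h𝔞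
  have hJ𝔞 : (𝔤 : FractionalIdeal (𝓞 F)⁰ F) * 𝔞 ≤ 𝔞 := mul_le_of_le_one_left' coeIdeal_le_one
  have hχa_mul : ∀ β ∈ 𝔞, χa (y * β) = χ (Ideal.span {y}) * χa β := fun β hβ =>
    apply_mul_eq_of_isTotPos h𝔞 hJ hJ𝔞 hχmul hχaper hχaval hy_pos hβ
  have hξ_mul : ∀ β ∈ 𝔞, ξ (-(y * β)) = ξ (-β) := fun β hβ => by
    rw [← mul_neg]
    exact apply_algebraMap_mul_of_sub_one_mem hξnonprim hy_mod (Submodule.neg_mem _ hβ)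
  have hsum : ∑ β ∈ B, χa (y * β) * ξ (-(y * β)) = ∑ β ∈ B, χa β * ξ (-β) := by
    refine sum_algebraMap_mul_eq_sum_of_isCoprime hB1 hB2 (f := fun x => χa x * ξ (-x))
      (fun x hx d hd => ?_) hy_cop
    rw [hχaper x d hd, neg_add, hξper _ (Submodule.neg_mem _ hx) _ (Submodule.neg_mem _ hd)]
  have hS : χ (Ideal.span {y}) * ∑ β ∈ B, χa β * ξ (-β) = ∑ β ∈ B, χa β * ξ (-β) := by
    rw [Finset.mul_sum, ← hsum]
    refine Finset.sum_congr rfl fun β hβ => ?_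
    rw [hχa_mul β (hB1 β hβ), hξ_mul β (hB1 β hβ), mul_assoc]
  by_contra hne
  exact hχy ((mul_eq_right₀ (right_ne_zero_of_mul hne)).1 hS)

/-- **Vanishing of `c_χ(ξ)` for a primitive `χ` at a non-primitive `ξ`.**
`F` totally real, `𝔤 ≠ 0` an integral ideal, `χ` a primitive Hecke character of conductor
`𝔤` (it does not factor through `Cl_F^+(𝔤'')` for any `𝔤'' ⊋ 𝔤`), and `ξ ∈ 𝕋^𝔞[𝔤]` a
non-primitive torsion point, i.e. `ξ` factors through `𝔞/𝔤'𝔞` for some `𝔤' ⊋ 𝔤`.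
Then `c_χ(ξ) = N𝔤⁻¹ ∑_{β ∈ 𝔞/𝔤𝔞} χ_𝔞(β) ξ(−β) = 0`. -/
theorem c_chi_vanishes_at_nonprimitive_torsion
    (F : Type*) [Field F] [NumberField F]
    (htr : ∀ v : NumberField.InfinitePlace F, v.IsReal)
    (𝔤 : Ideal (𝓞 F)) (h𝔤 : 𝔤 ≠ ⊥)
    (𝔞 : FractionalIdeal (𝓞 F)⁰ F) (h𝔞 : 𝔞 ≠ 0)
    -- `χ`, a finite Hecke character mod `𝔤` on ideals, extended by zero:
    (χ : Ideal (𝓞 F) → ℂ)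
    (hχmul : ∀ I J, χ (I * J) = χ I * χ J)
    (hχzero : ∀ I, ¬ IsCoprime I 𝔤 → χ I = 0)
    (hχne : ∀ I, IsCoprime I 𝔤 → χ I ≠ 0)
    (hχray : ∀ y : 𝓞 F, IsTotPos F (y : F) → y - 1 ∈ 𝔤 → χ (Ideal.span {y}) = 1)
    -- primitivity of `χ`: it does not factor through any `Cl_F^+(𝔤'')`, `𝔤'' ⊋ 𝔤`:
    (hχprim : ∀ 𝔤'' : Ideal (𝓞 F), 𝔤 < 𝔤'' →
      ¬ ∀ y : 𝓞 F, IsTotPos F (y : F) → y - 1 ∈ 𝔤'' → IsCoprime (Ideal.span {y}) 𝔤 →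
        χ (Ideal.span {y}) = 1)
    -- the induced function `χ_𝔞 : 𝔞/𝔤𝔞 → ℂ`:
    (χa : F → ℂ)
    (hχaper : ∀ α γ : F, γ ∈ (𝔤 : FractionalIdeal (𝓞 F)⁰ F) * 𝔞 → χa (α + γ) = χa α)
    (hχaval : ∀ α ∈ 𝔞, IsTotPos F α → ∀ I : Ideal (𝓞 F),
      (I : FractionalIdeal (𝓞 F)⁰ F) = 𝔞⁻¹ * spanSingleton (𝓞 F)⁰ α → χa α = χ I)
    -- `ξ`, a `𝔤`-torsion point of `𝕋^𝔞` which is non-primitive: it factors through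
    -- `𝔞/𝔤'𝔞` for some `𝔤' ⊋ 𝔤`:
    (ξ : F → ℂ)
    (hξadd : ∀ α ∈ 𝔞, ∀ β ∈ 𝔞, ξ (α + β) = ξ α * ξ β)
    (hξone : ξ 0 = 1)
    (hξper : ∀ α ∈ 𝔞, ∀ γ ∈ (𝔤 : FractionalIdeal (𝓞 F)⁰ F) * 𝔞, ξ (α + γ) = ξ α)
    (𝔤' : Ideal (𝓞 F)) (h𝔤' : 𝔤 < 𝔤')
    (hξnonprim : ∀ α ∈ 𝔞, ∀ γ ∈ (𝔤' : FractionalIdeal (𝓞 F)⁰ F) * 𝔞, ξ (α + γ) = ξ α)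
    -- a set of representatives `B` of `𝔞/𝔤𝔞`:
    (B : Finset F)
    (hB1 : ∀ β ∈ B, β ∈ 𝔞)
    (hB2 : ∀ α ∈ 𝔞, ∃! β, β ∈ B ∧ α - β ∈ (𝔤 : FractionalIdeal (𝓞 F)⁰ F) * 𝔞) :
    ((Ideal.absNorm 𝔤 : ℂ))⁻¹ * ∑ β ∈ B, χa β * ξ (-β) = 0 :=
  c_chi_vanishes_at_nonprimitive_torsion_general F 𝔤 h𝔤 𝔞 h𝔞 χ hχmul hχprim χa hχaper hχaval ξ hξper
    𝔤' h𝔤' hξnonprim B hB1 hB2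
end

section
/- Let F be a totally real field, 𝔤 an integral ideal, 𝔞 a fractional ideal, χ a Hecke character of conductor 𝔤, ξ ∈ 𝕋^𝔞_0[𝔤] a primitive 𝔤-torsion point, and 𝔟 an integral ideal prime to 𝔤. Define ξ^𝔟 ∈ 𝕋^{𝔞𝔟}[𝔤] as the restriction of ξ along the inclusion 𝔞𝔟 ⊆ 𝔞 (inducing 𝔞𝔟/𝔤𝔞𝔟 ≅ 𝔞/𝔤𝔞), and the Gauss sum g(χ, ξ) := ∑_{β ∈ 𝔞/𝔤𝔞} χ_𝔞(β) ξ(−β). Then g(χ, ξ^𝔟) = χ(𝔟)^{-1} g(χ, ξ). -/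
/-!
Since `𝔟 + 𝔤 = 1`, the inclusion `𝔞𝔟 ⊆ 𝔞` induces a bijection `𝔞𝔟/𝔤𝔞𝔟 ≅ 𝔞/𝔤𝔞`, so the two
Gauss sums run over the same classes, and `ξ^𝔟` agrees with `ξ` on them. To compare the character
values, move a representative within its class mod `𝔤𝔞𝔟` to a totally positive `α` (possible since
`𝔤𝔞𝔟` contains a totally positive element, e.g. a square, and `F` has finitely many real
embeddings); then `χ_{𝔞𝔟}(α) = χ((𝔞𝔟)⁻¹α)` and `χ_𝔞(α) = χ(𝔞⁻¹α) = χ(𝔟) χ((𝔞𝔟)⁻¹α)`.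
-/

open scoped nonZeroDivisors
open NumberField FractionalIdeal

theorem Submodule.sum_transversal_eq_sum_transversal {R A M : Type*} [Ring R] [AddCommGroup A]
    [Module R A] [AddCommMonoid M] {L H L' H' : Submodule R A}
    (hL' : L' ≤ L) (hH' : H' ≤ H) (hinj : H ⊓ L' ≤ H') (hsurj : L ≤ L' ⊔ H) {B B' : Finset A}
    (hB1 : ∀ β ∈ B, β ∈ L) (hB2 : ∀ α ∈ L, ∃! β, β ∈ B ∧ α - β ∈ H)
    (hB'1 : ∀ β ∈ B', β ∈ L') (hB'2 : ∀ α ∈ L', ∃! β, β ∈ B' ∧ α - β ∈ H')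
    {f g : A → M} (hfg : ∀ β' ∈ L', ∀ β ∈ L, β' - β ∈ H → f β' = g β) :
    ∑ β ∈ B', f β = ∑ β ∈ B, g β := by
  choose! rep hrep using fun α hα => (hB2 α hα).exists
  have hrepB' : ∀ β' ∈ B', rep β' ∈ B ∧ β' - rep β' ∈ H := fun β' h => hrep β' (hL' (hB'1 β' h))
  refine Finset.sum_nbij rep (fun β' h => (hrepB' β' h).1) ?_ ?_
    (fun β' h => hfg β' (hB'1 β' h) _ (hB1 _ (hrepB' β' h).1) (hrepB' β' h).2)
  · intro a₁ h₁ a₂ h₂ heq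
    have hH : a₁ - a₂ ∈ H := by
      simpa [heq] using H.sub_mem (hrepB' a₁ h₁).2 (hrepB' a₂ h₂).2
    have hH' : a₁ - a₂ ∈ H' := hinj ⟨hH, L'.sub_mem (hB'1 a₁ h₁) (hB'1 a₂ h₂)⟩
    exact (hB'2 a₁ (hB'1 a₁ h₁)).unique ⟨h₁, by simp⟩ ⟨h₂, hH'⟩
  · intro β hβ
    obtain ⟨y, hy, z, hz, rfl⟩ := Submodule.mem_sup.1 (hsurj (hB1 β hβ))
    obtain ⟨β', ⟨hβ', hyβ'⟩, -⟩ := hB'2 y hy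
    refine ⟨β', hβ', (hB2 β' (hL' (hB'1 β' hβ'))).unique (hrepB' β' hβ') ⟨hβ, ?_⟩⟩
    simpa [sub_add_eq_sub_sub] using H.sub_mem (H.neg_mem (hH' hyβ')) hz

namespace FractionalIdeal

variable {R P : Type*} [CommRing R] [CommRing P] [Algebra R P] {S : Submonoid R}

theorem mul_add_mul_eq_of_isCoprime {𝔟 𝔤 : Ideal R} (h : IsCoprime 𝔟 𝔤) (𝔞 : FractionalIdeal S P) :
    𝔞 * 𝔟 + 𝔤 * 𝔞 = 𝔞 := by
  rw [mul_comm _ 𝔞, ← mul_add, ← coeIdeal_sup, h.sup_eq, coeIdeal_top, mul_one]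

theorem mul_inf_mul_le_of_isCoprime {𝔟 𝔤 : Ideal R} (h : IsCoprime 𝔟 𝔤) (𝔞 : FractionalIdeal S P) :
    𝔤 * 𝔞 ⊓ 𝔞 * 𝔟 ≤ 𝔤 * (𝔞 * 𝔟) := by
  set X : FractionalIdeal S P := ↑𝔤 * 𝔞 ⊓ 𝔞 * ↑𝔟
  rw [← mul_add_mul_eq_of_isCoprime h X, ← sup_eq_add]
  exact sup_le ((mul_le_mul_left inf_le_left _).trans_eq (mul_assoc _ _ _))
    (mul_le_mul_right inf_le_right _)

theorem exists_coeIdeal_eq_inv_mul_spanSingleton_s14 {R K : Type*} [CommRing R]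
    [IsDedekindDomain R] [Field K] [Algebra R K] [IsFractionRing R K]
    {J : FractionalIdeal R⁰ K} (hJ : J ≠ 0) {α : K} (hα : α ∈ J) :
    ∃ I : Ideal R, (I : FractionalIdeal R⁰ K) = J⁻¹ * spanSingleton R⁰ α := by
  refine le_one_iff_exists_coeIdeal.1 ?_
  calc J⁻¹ * spanSingleton R⁰ α ≤ J⁻¹ * J := mul_le_mul_right (spanSingleton_le_iff_mem.2 hα) _
    _ = 1 := inv_mul_cancel₀ hJ

end FractionalIdeal

theorem exists_mem_isTotPos {F : Type*} [Field F] [NumberField F]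
    {J : FractionalIdeal (𝓞 F)⁰ F} (hJ : J ≠ 0) : ∃ γ ∈ J, IsTotPos F γ := by
  obtain ⟨r, hr0, hrJ⟩ := exists_ne_zero_mem_isInteger hJ
  have hr : (r : F) ≠ 0 := by exact_mod_cast hr0
  refine ⟨(r : F) * r, ?_, fun τ => ?_⟩
  · simpa [Algebra.smul_def] using Submodule.smul_mem (J : Submodule (𝓞 F) F) r hrJ
  · rw [map_mul, ← sq]
    exact pow_two_pos_of_ne_zero ((map_ne_zero τ).2 hr)

theorem exists_add_mem_isTotPos {F : Type*} [Field F] [NumberField F]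
    {J : FractionalIdeal (𝓞 F)⁰ F} (hJ : J ≠ 0) (β : F) : ∃ γ ∈ J, IsTotPos F (β + γ) := by
  obtain ⟨γ, hγJ, hγ⟩ := exists_mem_isTotPos hJ
  have hlarge : ∀ᶠ n : ℕ in Filter.atTop, ∀ τ : F →+* ℝ, 0 < τ β + n * τ γ := by
    refine Filter.eventually_all.2 fun τ => ?_
    exact (Filter.tendsto_atTop_add_const_left _ _
      (tendsto_natCast_atTop_atTop.atTop_mul_const (hγ τ))).eventually_gt_atTop 0
  obtain ⟨n, hn⟩ := hlarge.exists
  refine ⟨n * γ, ?_, fun τ => by simpa using hn τ⟩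
  simpa [Algebra.smul_def] using Submodule.smul_mem (J : Submodule (𝓞 F) F) (n : 𝓞 F) hγJ

theorem inducedChar_mul_eq_inv_mul_of_sub_mem {F : Type*} [Field F] [NumberField F]
    {𝔤 𝔟 : Ideal (𝓞 F)} (h𝔤 : 𝔤 ≠ ⊥) (h𝔟 : 𝔟 ≠ ⊥) {𝔞 : FractionalIdeal (𝓞 F)⁰ F} (h𝔞 : 𝔞 ≠ 0)
    {χ : Ideal (𝓞 F) → ℂ} (hχmul : ∀ I J, χ (I * J) = χ I * χ J) (hχ𝔟 : χ 𝔟 ≠ 0)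
    {χa χab : F → ℂ}
    (hχaper : ∀ α γ : F, γ ∈ (𝔤 : FractionalIdeal (𝓞 F)⁰ F) * 𝔞 → χa (α + γ) = χa α)
    (hχaval : ∀ α ∈ 𝔞, IsTotPos F α → ∀ I : Ideal (𝓞 F),
      (I : FractionalIdeal (𝓞 F)⁰ F) = 𝔞⁻¹ * spanSingleton (𝓞 F)⁰ α → χa α = χ I)
    (hχabper : ∀ α γ : F,
      γ ∈ (𝔤 : FractionalIdeal (𝓞 F)⁰ F) * (𝔞 * (𝔟 : FractionalIdeal (𝓞 F)⁰ F)) →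
      χab (α + γ) = χab α)
    (hχabval : ∀ α ∈ 𝔞 * (𝔟 : FractionalIdeal (𝓞 F)⁰ F), IsTotPos F α →
      ∀ I : Ideal (𝓞 F),
      (I : FractionalIdeal (𝓞 F)⁰ F) =
        (𝔞 * (𝔟 : FractionalIdeal (𝓞 F)⁰ F))⁻¹ * spanSingleton (𝓞 F)⁰ α → χab α = χ I)
    {β' β : F} (hβ' : β' ∈ 𝔞 * (𝔟 : FractionalIdeal (𝓞 F)⁰ F))
    (hd : β' - β ∈ (𝔤 : FractionalIdeal (𝓞 F)⁰ F) * 𝔞) :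
    χab β' = (χ 𝔟)⁻¹ * χa β := by
  have h𝔟0 : (𝔟 : FractionalIdeal (𝓞 F)⁰ F) ≠ 0 := coeIdeal_ne_zero.2 h𝔟
  have h𝔞𝔟 : 𝔞 * 𝔟 ≠ 0 := mul_ne_zero h𝔞 h𝔟0
  obtain ⟨γ, hγ, hpos⟩ := exists_add_mem_isTotPos (mul_ne_zero (coeIdeal_ne_zero.2 h𝔤) h𝔞𝔟) β'
  have h𝔞𝔟_le : 𝔞 * (𝔟 : FractionalIdeal (𝓞 F)⁰ F) ≤ 𝔞 := mul_le_of_le_one_right' coeIdeal_le_one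
  have h𝔤𝔞𝔟_le : (𝔤 : FractionalIdeal (𝓞 F)⁰ F) * (𝔞 * 𝔟) ≤ 𝔞 * 𝔟 :=
    mul_le_of_le_one_left' coeIdeal_le_one
  have hα : β' + γ ∈ 𝔞 * 𝔟 := (𝔞 * (𝔟 : FractionalIdeal (𝓞 F)⁰ F)).val.add_mem hβ' (h𝔤𝔞𝔟_le hγ)
  obtain ⟨I, hI⟩ := exists_coeIdeal_eq_inv_mul_spanSingleton_s14 h𝔞𝔟 hα
  have h𝔟I : ((𝔟 * I : Ideal (𝓞 F)) : FractionalIdeal (𝓞 F)⁰ F) =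
      𝔞⁻¹ * spanSingleton (𝓞 F)⁰ (β' + γ) := by
    rw [coeIdeal_mul, hI, mul_inv, mul_comm 𝔞⁻¹, ← mul_assoc, ← mul_assoc,
      mul_inv_cancel₀ h𝔟0, one_mul]
  calc χab β' = χab (β' + γ) := (hχabper β' γ hγ).symm
    _ = χ I := hχabval _ hα hpos I hI
    _ = (χ 𝔟)⁻¹ * χ (𝔟 * I) := by rw [hχmul, inv_mul_cancel_left₀ hχ𝔟]
    _ = (χ 𝔟)⁻¹ * χa (β' + γ) := by
      rw [hχaval _ (h𝔞𝔟_le hα) hpos _ h𝔟I]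
    _ = (χ 𝔟)⁻¹ * χa β := by
      rw [show β' + γ = β + ((β' - β) + γ) by ring, hχaper β _
        (((𝔤 : FractionalIdeal (𝓞 F)⁰ F) * 𝔞).val.add_mem hd (mul_le_mul_right h𝔞𝔟_le _ hγ))]

theorem gauss_sum_action_general
    (F : Type*) [Field F] [NumberField F]
    (𝔤 : Ideal (𝓞 F)) (h𝔤 : 𝔤 ≠ ⊥)
    (𝔞 : FractionalIdeal (𝓞 F)⁰ F) (h𝔞 : 𝔞 ≠ 0)
    (𝔟 : Ideal (𝓞 F)) (h𝔟 : 𝔟 ≠ ⊥) (h𝔟𝔤 : IsCoprime 𝔟 𝔤)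
    -- `χ`, a finite Hecke character mod `𝔤` on ideals, extended by zero:
    (χ : Ideal (𝓞 F) → ℂ)
    (hχmul : ∀ I J, χ (I * J) = χ I * χ J)
    (hχne : ∀ I, IsCoprime I 𝔤 → χ I ≠ 0)
    -- the induced functions `χ_𝔞` on `𝔞/𝔤𝔞` and `χ_{𝔞𝔟}` on `𝔞𝔟/𝔤𝔞𝔟`:
    (χa χab : F → ℂ)
    (hχaper : ∀ α γ : F, γ ∈ (𝔤 : FractionalIdeal (𝓞 F)⁰ F) * 𝔞 → χa (α + γ) = χa α)
    (hχaval : ∀ α ∈ 𝔞, IsTotPos F α → ∀ I : Ideal (𝓞 F),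
      (I : FractionalIdeal (𝓞 F)⁰ F) = 𝔞⁻¹ * spanSingleton (𝓞 F)⁰ α → χa α = χ I)
    (hχabper : ∀ α γ : F,
      γ ∈ (𝔤 : FractionalIdeal (𝓞 F)⁰ F) * (𝔞 * (𝔟 : FractionalIdeal (𝓞 F)⁰ F)) →
      χab (α + γ) = χab α)
    (hχabval : ∀ α ∈ 𝔞 * (𝔟 : FractionalIdeal (𝓞 F)⁰ F), IsTotPos F α →
      ∀ I : Ideal (𝓞 F),
      (I : FractionalIdeal (𝓞 F)⁰ F) =
        (𝔞 * (𝔟 : FractionalIdeal (𝓞 F)⁰ F))⁻¹ * spanSingleton (𝓞 F)⁰ α → χab α = χ I)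
    -- `ξ`, a primitive `𝔤`-torsion point of `𝕋^𝔞`:
    (ξ : F → ℂ)
    (hξper : ∀ α ∈ 𝔞, ∀ γ ∈ (𝔤 : FractionalIdeal (𝓞 F)⁰ F) * 𝔞, ξ (α + γ) = ξ α)
    -- sets of representatives `B` of `𝔞/𝔤𝔞` and `B'` of `𝔞𝔟/𝔤𝔞𝔟`:
    (B B' : Finset F)
    (hB1 : ∀ β ∈ B, β ∈ 𝔞)
    (hB2 : ∀ α ∈ 𝔞, ∃! β, β ∈ B ∧ α - β ∈ (𝔤 : FractionalIdeal (𝓞 F)⁰ F) * 𝔞)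
    (hB'1 : ∀ β ∈ B', β ∈ 𝔞 * (𝔟 : FractionalIdeal (𝓞 F)⁰ F))
    (hB'2 : ∀ α ∈ 𝔞 * (𝔟 : FractionalIdeal (𝓞 F)⁰ F), ∃! β, β ∈ B' ∧
      α - β ∈ (𝔤 : FractionalIdeal (𝓞 F)⁰ F) * (𝔞 * (𝔟 : FractionalIdeal (𝓞 F)⁰ F))) :
    ∑ β ∈ B', χab β * ξ (-β) = (χ 𝔟)⁻¹ * ∑ β ∈ B, χa β * ξ (-β) := by
  have h𝔞𝔟_le : 𝔞 * (𝔟 : FractionalIdeal (𝓞 F)⁰ F) ≤ 𝔞 := mul_le_of_le_one_right' coeIdeal_le_one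
  rw [Finset.mul_sum]
  refine Submodule.sum_transversal_eq_sum_transversal (coe_le_coe.2 h𝔞𝔟_le)
    (coe_le_coe.2 (mul_le_mul_right h𝔞𝔟_le _)) ?_ ?_ hB1 hB2 hB'1 hB'2 ?_
  · rw [← coe_inf, coe_le_coe]
    exact mul_inf_mul_le_of_isCoprime h𝔟𝔤 𝔞
  · rw [← coe_sup, coe_le_coe, sup_eq_add, mul_add_mul_eq_of_isCoprime h𝔟𝔤]
  · intro β' hβ' β hβ hd
    have hξ : ξ (-β') = ξ (-β) := by
      simpa only [sub_eq_add_neg, neg_add_cancel_left] using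
        hξper (-β) (Submodule.neg_mem _ hβ) (β - β') (neg_sub β' β ▸ Submodule.neg_mem _ hd)
    rw [inducedChar_mul_eq_inv_mul_of_sub_mem h𝔤 h𝔟 h𝔞 hχmul (hχne 𝔟 h𝔟𝔤) hχaper hχaval
      hχabper hχabval hβ' hd, hξ, mul_assoc]

/-- **Behaviour of Gauss sums under the action of ideal classes.**
`F` totally real, `𝔤 ≠ 0` an integral ideal, `𝔞 ≠ 0` a fractional ideal, `χ` a Hecke
character of conductor `𝔤` (extended by zero), `ξ ∈ 𝕋^𝔞_0[𝔤]` a primitive `𝔤`-torsion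
point, and `𝔟` an integral ideal prime to `𝔤`.  Let `ξ^𝔟 ∈ 𝕋^{𝔞𝔟}[𝔤]` be the
restriction of `ξ` along `𝔞𝔟 ⊆ 𝔞` and `g(χ,ξ) = ∑_{β ∈ 𝔞/𝔤𝔞} χ_𝔞(β) ξ(−β)` the Gauss
sum.  Then `g(χ, ξ^𝔟) = χ(𝔟)⁻¹ g(χ, ξ)`. -/
theorem gauss_sum_action
    (F : Type*) [Field F] [NumberField F]
    (htr : ∀ v : NumberField.InfinitePlace F, v.IsReal)
    (𝔤 : Ideal (𝓞 F)) (h𝔤 : 𝔤 ≠ ⊥)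
    (𝔞 : FractionalIdeal (𝓞 F)⁰ F) (h𝔞 : 𝔞 ≠ 0)
    (𝔟 : Ideal (𝓞 F)) (h𝔟 : 𝔟 ≠ ⊥) (h𝔟𝔤 : IsCoprime 𝔟 𝔤)
    -- `χ`, a finite Hecke character mod `𝔤` on ideals, extended by zero:
    (χ : Ideal (𝓞 F) → ℂ)
    (hχmul : ∀ I J, χ (I * J) = χ I * χ J)
    (hχzero : ∀ I, ¬ IsCoprime I 𝔤 → χ I = 0)
    (hχne : ∀ I, IsCoprime I 𝔤 → χ I ≠ 0)
    (hχray : ∀ y : 𝓞 F, IsTotPos F (y : F) → y - 1 ∈ 𝔤 → χ (Ideal.span {y}) = 1)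
    -- the induced functions `χ_𝔞` on `𝔞/𝔤𝔞` and `χ_{𝔞𝔟}` on `𝔞𝔟/𝔤𝔞𝔟`:
    (χa χab : F → ℂ)
    (hχaper : ∀ α γ : F, γ ∈ (𝔤 : FractionalIdeal (𝓞 F)⁰ F) * 𝔞 → χa (α + γ) = χa α)
    (hχaval : ∀ α ∈ 𝔞, IsTotPos F α → ∀ I : Ideal (𝓞 F),
      (I : FractionalIdeal (𝓞 F)⁰ F) = 𝔞⁻¹ * spanSingleton (𝓞 F)⁰ α → χa α = χ I)
    (hχabper : ∀ α γ : F,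
      γ ∈ (𝔤 : FractionalIdeal (𝓞 F)⁰ F) * (𝔞 * (𝔟 : FractionalIdeal (𝓞 F)⁰ F)) →
      χab (α + γ) = χab α)
    (hχabval : ∀ α ∈ 𝔞 * (𝔟 : FractionalIdeal (𝓞 F)⁰ F), IsTotPos F α →
      ∀ I : Ideal (𝓞 F),
      (I : FractionalIdeal (𝓞 F)⁰ F) =
        (𝔞 * (𝔟 : FractionalIdeal (𝓞 F)⁰ F))⁻¹ * spanSingleton (𝓞 F)⁰ α → χab α = χ I)
    -- `ξ`, a primitive `𝔤`-torsion point of `𝕋^𝔞`: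
    (ξ : F → ℂ)
    (hξadd : ∀ α ∈ 𝔞, ∀ β ∈ 𝔞, ξ (α + β) = ξ α * ξ β)
    (hξone : ξ 0 = 1)
    (hξper : ∀ α ∈ 𝔞, ∀ γ ∈ (𝔤 : FractionalIdeal (𝓞 F)⁰ F) * 𝔞, ξ (α + γ) = ξ α)
    (hξprim : ∀ 𝔤' : Ideal (𝓞 F), 𝔤 < 𝔤' →
      ∃ α ∈ 𝔞, ∃ γ ∈ (𝔤' : FractionalIdeal (𝓞 F)⁰ F) * 𝔞, ξ (α + γ) ≠ ξ α)
    -- sets of representatives `B` of `𝔞/𝔤𝔞` and `B'` of `𝔞𝔟/𝔤𝔞𝔟`: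
    (B B' : Finset F)
    (hB1 : ∀ β ∈ B, β ∈ 𝔞)
    (hB2 : ∀ α ∈ 𝔞, ∃! β, β ∈ B ∧ α - β ∈ (𝔤 : FractionalIdeal (𝓞 F)⁰ F) * 𝔞)
    (hB'1 : ∀ β ∈ B', β ∈ 𝔞 * (𝔟 : FractionalIdeal (𝓞 F)⁰ F))
    (hB'2 : ∀ α ∈ 𝔞 * (𝔟 : FractionalIdeal (𝓞 F)⁰ F), ∃! β, β ∈ B' ∧
      α - β ∈ (𝔤 : FractionalIdeal (𝓞 F)⁰ F) * (𝔞 * (𝔟 : FractionalIdeal (𝓞 F)⁰ F))) :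
    ∑ β ∈ B', χab β * ξ (-β) = (χ 𝔟)⁻¹ * ∑ β ∈ B, χa β * ξ (-β) :=
  gauss_sum_action_general F 𝔤 h𝔤 𝔞 h𝔞 𝔟 h𝔟 h𝔟𝔤 χ hχmul hχne χa χab hχaper hχaval hχabper hχabval ξ
    hξper B B' hB1 hB2 hB'1 hB'2
end

section
/- Let F be a totally real field with narrow ray class group Cl_F^+(𝔤) for a nonzero integral ideal 𝔤. The action 𝔟 ↦ (ξ ↦ ξ^𝔟) of Cl_F^+(𝔤) on the set 𝒯_0[𝔤] of F_+^×-orbits of primitive 𝔤-torsion points is well-defined (principal ideals (β) with β totally positive and β ≡ 1 mod 𝔤 act trivially) and simply transitive. -/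
open scoped nonZeroDivisors
open NumberField FractionalIdeal

/-- `ξ : F → ℂ` is a `𝔤`-torsion point of `𝕋^𝔞 = Hom(𝔞, ℚ̄^×)`: an additive character
of `𝔞` trivial on `𝔤𝔞`. -/
def IsTorsChar {F : Type*} [Field F] [NumberField F] (𝔤 : Ideal (𝓞 F))
    (𝔞 : FractionalIdeal (𝓞 F)⁰ F) (ξ : F → ℂ) : Prop :=
  (∀ α ∈ 𝔞, ∀ β ∈ 𝔞, ξ (α + β) = ξ α * ξ β) ∧ ξ 0 = 1 ∧
    (∀ α ∈ 𝔞, ∀ γ ∈ (𝔤 : FractionalIdeal (𝓞 F)⁰ F) * 𝔞, ξ (α + γ) = ξ α)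

/-- A primitive `𝔤`-torsion point: one not factoring through `𝔞/𝔤'𝔞` for any `𝔤' ⊋ 𝔤`. -/
def IsPrimTorsChar {F : Type*} [Field F] [NumberField F] (𝔤 : Ideal (𝓞 F))
    (𝔞 : FractionalIdeal (𝓞 F)⁰ F) (ξ : F → ℂ) : Prop :=
  IsTorsChar 𝔤 𝔞 ξ ∧ ∀ 𝔤' : Ideal (𝓞 F), 𝔤 < 𝔤' →
    ∃ α ∈ 𝔞, ∃ γ ∈ (𝔤' : FractionalIdeal (𝓞 F)⁰ F) * 𝔞, ξ (α + γ) ≠ ξ α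

/-- The `F_+^×`-equivalence on pairs `(𝔞, ξ)` of a fractional ideal and a torsion point:
`(𝔞, ξ) ∼ (𝔞', ξ')` iff there is a totally positive `x` with `𝔞 = x𝔞'` and
`ξ'(α) = ξ(xα)` on `𝔞'`. -/
def TorsRel {F : Type*} [Field F] [NumberField F]
    (𝔞 : FractionalIdeal (𝓞 F)⁰ F) (ξ : F → ℂ)
    (𝔞' : FractionalIdeal (𝓞 F)⁰ F) (ξ' : F → ℂ) : Prop :=
  ∃ x : F, IsTotPos F x ∧ 𝔞 = spanSingleton (𝓞 F)⁰ x * 𝔞' ∧ ∀ α ∈ 𝔞', ξ' α = ξ (x * α)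

/-- `x ≡ 1 mod^× 𝔤`. -/
def MulCongOne {F : Type*} [Field F] [NumberField F] (𝔤 : Ideal (𝓞 F)) (x : F) : Prop :=
  ∃ a b : 𝓞 F, (b : F) ≠ 0 ∧ x = (a : F) / (b : F) ∧ a - 1 ∈ 𝔤 ∧ b - 1 ∈ 𝔤

/-!
Choose `θ ∈ 𝔞` generating `𝔞/𝔤𝔞 ≅ 𝓞_F/𝔤`. Then `r ↦ ξ(rθ)` turns a primitive `𝔤`-torsion point
into a primitive additive character of the finite ring `𝓞_F/𝔤`, and the primitive characters of a
finite ring form a single orbit under its units, because `|Hom(R, ℂ^×)| = |R|`.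

For transitivity, a moving lemma gives `𝔞𝔠 = z𝔞'` with `𝔠` prime to `𝔤`. Pulling `ξ` back along
`z` gives a primitive point on `𝔞'`, which differs from `ξ'` by a unit `w` mod `𝔤`, and changing
`w` by an element of `𝔤` makes `zw` totally positive. For uniqueness, if two multipliers `x, x'`
give the same point, then `ξ` kills `(x' - x)𝔞' = (x'/x - 1)𝔟𝔞`. Primitivity forces
`(x'/x - 1)𝔟 ⊆ 𝔤`, i.e. `x'/x ≡ 1 mod^× 𝔤`.
-/

lemma isCoprime_span_singleton_of_isUnit_mk {R : Type*} [CommRing R] {I : Ideal R} {t : R}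
    (ht : IsUnit (Ideal.Quotient.mk I t)) : IsCoprime (Ideal.span {t}) I := by
  obtain ⟨v, hv⟩ := ht.exists_right_inv
  obtain ⟨v, rfl⟩ := Ideal.Quotient.mk_surjective v
  refine Ideal.isCoprime_iff_exists.mpr
    ⟨t * v, Ideal.mul_mem_right _ _ (Ideal.mem_span_singleton_self t), 1 - t * v, ?_, by ring⟩
  rw [← Ideal.Quotient.eq_zero_iff_mem, map_sub, map_one, map_mul, hv, sub_self]

lemma exists_ne_zero_mem_sub_one_mem {R : Type*} [CommRing R] {I J : Ideal R} (hI : I ≠ ⊥)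
    (h : IsCoprime I J) : ∃ u ∈ I, u ≠ 0 ∧ u - 1 ∈ J := by
  obtain ⟨u, hu, g, hg, hug⟩ := Ideal.isCoprime_iff_exists.mp h
  have hu1 : u - 1 ∈ J := by simpa [← hug] using J.neg_mem hg
  by_cases hu0 : u = 0
  · obtain ⟨b, hb, hb0⟩ := Submodule.exists_mem_ne_zero_of_ne_bot hI
    have hJ : J = ⊤ := Ideal.eq_top_of_isUnit_mem _ hu1 (by simp [hu0])
    exact ⟨b, hb, hb0, hJ ▸ Submodule.mem_top⟩
  · exact ⟨u, hu, hu0, hu1⟩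

lemma AddChar.exists_isUnit_mulShift_eq {R : Type*} [CommRing R] [Finite R]
    {ψ ψ' : AddChar R ℂ} (hψ : ψ.IsPrimitive) (hψ' : ψ'.IsPrimitive) :
    ∃ u : R, IsUnit u ∧ ψ.mulShift u = ψ' := by
  have := Fintype.ofFinite R
  obtain ⟨u, rfl⟩ := ((Fintype.bijective_iff_injective_and_card _).mpr
    ⟨AddChar.to_mulShift_inj_of_isPrimitive hψ, AddChar.card_eq.symm⟩).2 ψ'
  exact ⟨u, by_contra fun hu => AddChar.not_isPrimitive_mulShift ψ hu hψ', rfl⟩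

section

variable {F : Type*} [Field F]

namespace IsTotPos

variable {x y : F}

lemma div (hx : IsTotPos F x) (hy : IsTotPos F y) : IsTotPos F (x / y) :=
  fun τ => by rw [map_div₀]; exact div_pos (hx τ) (hy τ)

lemma ne_zero [Nonempty (F →+* ℝ)] (hx : IsTotPos F x) : x ≠ 0 := by
  rintro rfl
  simpa using hx (Classical.arbitrary _)

lemma exists_add_nat_mul [NumberField F] (hy : IsTotPos F y) (x : F) :
    ∃ N : ℕ, IsTotPos F (x + N * y) := by
  obtain ⟨B, hB⟩ := (Set.finite_range fun τ : F →+* ℝ => -τ x / τ y).bddAbove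
  obtain ⟨N, hN⟩ := exists_nat_gt B
  refine ⟨N, fun τ => ?_⟩
  have h := (hB (Set.mem_range_self τ)).trans_lt hN
  rw [div_lt_iff₀ (hy τ)] at h
  simp only [map_add, map_mul, map_natCast]
  linarith

end IsTotPos

lemma isTotPos_sq {x : F} (hx : x ≠ 0) : IsTotPos F (x ^ 2) :=
  fun τ => by rw [map_pow]; exact sq_pos_of_ne_zero ((map_ne_zero τ).mpr hx)

namespace FractionalIdeal

lemma coe_mul_mem (r : 𝓞 F) {I : FractionalIdeal (𝓞 F)⁰ F} {x : F} (hx : x ∈ I) :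
    (r : F) * x ∈ I :=
  Submodule.smul_mem (I : Submodule (𝓞 F) F) r hx

lemma coe_mem_coeIdeal_iff {I : Ideal (𝓞 F)} {r : 𝓞 F} :
    (r : F) ∈ (I : FractionalIdeal (𝓞 F)⁰ F) ↔ r ∈ I := by
  simp [RingOfIntegers.coe_eq_algebraMap]

lemma coeIdeal_mul_le (I : Ideal (𝓞 F)) (J : FractionalIdeal (𝓞 F)⁰ F) :
    (I : FractionalIdeal (𝓞 F)⁰ F) * J ≤ J :=
  mul_le_of_le_one_left (zero_le _) coeIdeal_le_one

end FractionalIdeal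

variable [NumberField F]

lemma exists_mem_isTotPos_mul {𝔤 : Ideal (𝓞 F)} (h𝔤 : 𝔤 ≠ ⊥) {y : F} (hy : y ≠ 0) :
    ∃ c ∈ 𝔤, IsTotPos F (y * c) := by
  obtain ⟨a, b, hb, rfl⟩ := IsFractionRing.div_surjective (𝓞 F) y
  obtain ⟨g, hg, hg0⟩ := Submodule.exists_mem_ne_zero_of_ne_bot h𝔤
  have hb0 : algebraMap (𝓞 F) F b ≠ 0 :=
    IsFractionRing.to_map_ne_zero_of_mem_nonZeroDivisors hb
  have ha0 : algebraMap (𝓞 F) F a ≠ 0 := (div_ne_zero_iff.mp hy).1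
  refine ⟨g * g * a * b, 𝔤.mul_mem_right _ (𝔤.mul_mem_right _ (𝔤.mul_mem_right _ hg)), ?_⟩
  have hsq : algebraMap (𝓞 F) F a / algebraMap (𝓞 F) F b * ((g * g * a * b : 𝓞 F) : F) =
      ((g : F) * algebraMap (𝓞 F) F a) ^ 2 := by
    simp only [RingOfIntegers.coe_eq_algebraMap, map_mul]
    field_simp
  rw [hsq]
  exact isTotPos_sq (mul_ne_zero (by exact_mod_cast hg0) ha0)

lemma exists_sub_mem_isTotPos_mul {𝔤 : Ideal (𝓞 F)} (h𝔤 : 𝔤 ≠ ⊥) {y : F} (hy : y ≠ 0)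
    (r : 𝓞 F) : ∃ t : 𝓞 F, t - r ∈ 𝔤 ∧ IsTotPos F (y * t) := by
  obtain ⟨c, hc, hyc⟩ := exists_mem_isTotPos_mul h𝔤 hy
  obtain ⟨N, hN⟩ := hyc.exists_add_nat_mul (y * r)
  refine ⟨r + N * c, by simpa using 𝔤.mul_mem_left _ hc, ?_⟩
  convert hN using 1
  push_cast
  ring

namespace FractionalIdeal

variable {𝔤 𝔟 : Ideal (𝓞 F)} {𝔞 𝔞' : FractionalIdeal (𝓞 F)⁰ F} {x : F}

lemma mul_mem_mul_of_mul_coeIdeal_eq (h : 𝔞 * 𝔟 = spanSingleton (𝓞 F)⁰ x * 𝔞')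
    (I : FractionalIdeal (𝓞 F)⁰ F) {γ : F} (hγ : γ ∈ I * 𝔞') : x * γ ∈ I * 𝔞 := by
  have hle : spanSingleton (𝓞 F)⁰ x * (I * 𝔞') ≤ I * 𝔞 := by
    rw [mul_left_comm, ← h, ← mul_assoc]
    exact mul_le_of_le_one_right (zero_le _) coeIdeal_le_one
  exact hle (mul_mem_mul (mem_spanSingleton_self _ x) hγ)

lemma mul_mem_of_mul_coeIdeal_eq (h : 𝔞 * 𝔟 = spanSingleton (𝓞 F)⁰ x * 𝔞') {α : F}
    (hα : α ∈ 𝔞') : x * α ∈ 𝔞 := by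
  simpa using mul_mem_mul_of_mul_coeIdeal_eq h 1 (by simpa using hα)

lemma exists_generator_mod (h𝔤 : 𝔤 ≠ ⊥) (h𝔞 : 𝔞 ≠ 0) :
    ∃ θ ∈ 𝔞, ∀ α ∈ 𝔞, ∃ r : 𝓞 F, α - r * θ ∈ (𝔤 : FractionalIdeal (𝓞 F)⁰ F) * 𝔞 := by
  obtain ⟨θ, hθ⟩ := IsDedekindDomain.exists_add_spanSingleton_mul_eq (coeIdeal_mul_le 𝔤 𝔞)
    (mul_ne_zero (coeIdeal_ne_zero.mpr h𝔤) h𝔞) one_ne_zero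
  rw [mul_one] at hθ
  have hθ𝔞 : θ ∈ 𝔞 := by
    have h := le_add_self (a := spanSingleton (𝓞 F)⁰ θ) (b := (𝔤 : FractionalIdeal (𝓞 F)⁰ F) * 𝔞)
    rwa [hθ, spanSingleton_le_iff_mem] at h
  refine ⟨θ, hθ𝔞, fun α hα => ?_⟩
  rw [← hθ, mem_add] at hα
  obtain ⟨γ, hγ, β, hβ, rfl⟩ := hα
  obtain ⟨r, rfl⟩ := (mem_spanSingleton _).mp hβ
  exact ⟨r, by simpa [Algebra.smul_def] using hγ⟩

lemma exists_coprime_mul_eq_spanSingleton_mul (h𝔤 : 𝔤 ≠ ⊥) (h𝔞 : 𝔞 ≠ 0) (h𝔞' : 𝔞' ≠ 0) :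
    ∃ z : F, z ≠ 0 ∧ ∃ 𝔠 : Ideal (𝓞 F), IsCoprime 𝔠 𝔤 ∧
      𝔞 * 𝔠 = spanSingleton (𝓞 F)⁰ z * 𝔞' := by
  obtain ⟨z, hz0, hz⟩ : ∃ z : F, z ≠ 0 ∧
      (𝔤 : FractionalIdeal (𝓞 F)⁰ F) * 𝔞 + spanSingleton (𝓞 F)⁰ z * 𝔞' = 𝔞 := by
    obtain ⟨z, hz⟩ := IsDedekindDomain.exists_add_spanSingleton_mul_eq (coeIdeal_mul_le 𝔤 𝔞)
      (mul_ne_zero (coeIdeal_ne_zero.mpr h𝔤) h𝔞) h𝔞'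
    by_cases hz0 : z = 0
    · -- then `𝔤𝔞 = 𝔞`, and any nonzero `w` with `w𝔞' ≤ 𝔞` will do
      rw [hz0, spanSingleton_zero, zero_mul, add_zero] at hz
      obtain ⟨w, hw0, hw⟩ := exists_ne_zero_mem_isInteger (mul_ne_zero h𝔞 (inv_ne_zero h𝔞'))
      refine ⟨_, (map_ne_zero_iff _ (IsFractionRing.injective (𝓞 F) F)).mpr hw0, ?_⟩
      rw [hz, ← sup_eq_add, sup_eq_left]
      calc spanSingleton (𝓞 F)⁰ _ * 𝔞' ≤ 𝔞 * 𝔞'⁻¹ * 𝔞' := by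
            gcongr; exact spanSingleton_le_iff_mem.mpr hw
        _ = 𝔞 := by rw [mul_assoc, inv_mul_cancel₀ h𝔞', mul_one]
    · exact ⟨z, hz0, hz⟩
  have hle : spanSingleton (𝓞 F)⁰ z * 𝔞' * 𝔞⁻¹ ≤ 1 := by
    calc spanSingleton (𝓞 F)⁰ z * 𝔞' * 𝔞⁻¹ ≤ 𝔞 * 𝔞⁻¹ := by gcongr; exact hz ▸ le_add_self
      _ = 1 := mul_inv_cancel₀ h𝔞
  obtain ⟨𝔠, h𝔠⟩ := le_one_iff_exists_coeIdeal.mp hle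
  have h𝔞𝔠 : 𝔞 * 𝔠 = spanSingleton (𝓞 F)⁰ z * 𝔞' := by
    rw [h𝔠, mul_comm, mul_assoc, inv_mul_cancel₀ h𝔞, mul_one]
  refine ⟨z, hz0, 𝔠, ?_, h𝔞𝔠⟩
  rw [Ideal.isCoprime_iff_sup_eq, ← coeIdeal_inj (K := F), coeIdeal_sup, coeIdeal_top]
  apply mul_left_cancel₀ h𝔞
  rw [mul_add, h𝔞𝔠, mul_one, mul_comm 𝔞, add_comm, hz]

end FractionalIdeal

namespace IsTorsChar

variable {𝔤 : Ideal (𝓞 F)} {𝔞 : FractionalIdeal (𝓞 F)⁰ F} {ξ : F → ℂ}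

lemma eq_of_sub_mem (hξ : IsTorsChar 𝔤 𝔞 ξ) {α β : F} (hβ : β ∈ 𝔞)
    (hαβ : α - β ∈ (𝔤 : FractionalIdeal (𝓞 F)⁰ F) * 𝔞) : ξ α = ξ β := by
  simpa using hξ.2.2 β hβ _ hαβ

lemma eq_one_of_mem (hξ : IsTorsChar 𝔤 𝔞 ξ) {γ : F}
    (hγ : γ ∈ (𝔤 : FractionalIdeal (𝓞 F)⁰ F) * 𝔞) : ξ γ = 1 := by
  simpa [hξ.2.1] using hξ.eq_of_sub_mem (zero_mem 𝔞) (by simpa using hγ)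

lemma sub_eq_one (hξ : IsTorsChar 𝔤 𝔞 ξ) {α β : F} (hα : α ∈ 𝔞) (hβ : β ∈ 𝔞)
    (h : ξ α = ξ β) : ξ (α - β) = 1 := by
  have hβ0 : ξ β ≠ 0 := fun h0 => by
    simpa [hξ.2.1, h0] using hξ.1 β hβ (-β) (Submodule.neg_mem _ hβ)
  have := hξ.1 _ (Submodule.sub_mem _ hα hβ) β hβ
  rw [sub_add_cancel, h] at this
  exact (mul_eq_right₀ hβ0).mp this.symm

lemma mul_eq_of_sub_mem (hξ : IsTorsChar 𝔤 𝔞 ξ) {θ α : F} {r : 𝓞 F} (hθ : θ ∈ 𝔞)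
    (hr : α - r * θ ∈ (𝔤 : FractionalIdeal (𝓞 F)⁰ F) * 𝔞) (d : 𝓞 F) :
    ξ (d * α) = ξ ((d * r : 𝓞 F) * θ) :=
  hξ.eq_of_sub_mem (coe_mul_mem _ hθ) <| by
    push_cast
    rw [mul_assoc, ← mul_sub]
    exact coe_mul_mem d hr

noncomputable def quotChar (hξ : IsTorsChar 𝔤 𝔞 ξ) {θ : F} (hθ : θ ∈ 𝔞) :
    AddChar (𝓞 F ⧸ 𝔤) ℂ :=
  AddChar.toAddMonoidHomEquiv.symm <| QuotientAddGroup.lift 𝔤.toAddSubgroup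
    (AddChar.toAddMonoidHom
      { toFun := fun r => ξ (r * θ)
        map_zero_eq_one' := by simpa using hξ.2.1
        map_add_eq_mul' := fun r s => by
          simpa [add_mul] using hξ.1 _ (coe_mul_mem r hθ) _ (coe_mul_mem s hθ) })
    fun r hr => by simpa using hξ.eq_one_of_mem (mul_mem_mul (mem_coeIdeal_of_mem _ hr) hθ)

lemma quotChar_mk (hξ : IsTorsChar 𝔤 𝔞 ξ) {θ : F} (hθ : θ ∈ 𝔞) (r : 𝓞 F) :
    hξ.quotChar hθ (Ideal.Quotient.mk 𝔤 r) = ξ (r * θ) := rfl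

end IsTorsChar

namespace IsPrimTorsChar

variable {𝔤 : Ideal (𝓞 F)} {𝔞 : FractionalIdeal (𝓞 F)⁰ F} {ξ : F → ℂ}

lemma le_of_forall_eq_one (hξ : IsPrimTorsChar 𝔤 𝔞 ξ) {𝔥 : Ideal (𝓞 F)}
    (h𝔥 : ∀ γ ∈ (𝔥 : FractionalIdeal (𝓞 F)⁰ F) * 𝔞, ξ γ = 1) : 𝔥 ≤ 𝔤 := by
  by_contra h
  obtain ⟨α, hα, γ, hγ, hne⟩ := hξ.2 (𝔤 ⊔ 𝔥) (left_lt_sup.mpr h)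
  rw [coeIdeal_sup, add_mul, mem_add] at hγ
  obtain ⟨γ₁, hγ₁, γ₂, hγ₂, rfl⟩ := hγ
  have hα₁ : α + γ₁ ∈ 𝔞 := Submodule.add_mem _ hα (coeIdeal_mul_le 𝔤 𝔞 hγ₁)
  apply hne
  rw [← add_assoc, hξ.1.1 _ hα₁ _ (coeIdeal_mul_le 𝔥 𝔞 hγ₂), h𝔥 γ₂ hγ₂, mul_one,
    hξ.1.2.2 α hα γ₁ hγ₁]

lemma mem_of_forall_mul_eq_one (hξ : IsPrimTorsChar 𝔤 𝔞 ξ) {d : 𝓞 F}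
    (hd : ∀ α ∈ 𝔞, ξ (d * α) = 1) : d ∈ 𝔤 := by
  refine hξ.le_of_forall_eq_one (𝔥 := Ideal.span {d}) (fun γ hγ => ?_)
    (Ideal.mem_span_singleton_self d)
  rw [coeIdeal_span_singleton, mem_singleton_mul] at hγ
  obtain ⟨α, hα, rfl⟩ := hγ
  exact hd α hα

lemma le_coeIdeal_of_forall_eq_one (hξ : IsPrimTorsChar 𝔤 𝔞 ξ) {J : FractionalIdeal (𝓞 F)⁰ F}
    (hJ : J ≤ 1) (h : ∀ γ ∈ J * 𝔞, ξ γ = 1) : J ≤ 𝔤 := by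
  obtain ⟨𝔥, rfl⟩ := le_one_iff_exists_coeIdeal.mp hJ
  exact (coeIdeal_le_coeIdeal F).mpr (hξ.le_of_forall_eq_one h)

lemma comp_mul (hξ : IsPrimTorsChar 𝔤 𝔞 ξ) {𝔞' : FractionalIdeal (𝓞 F)⁰ F} {𝔟 : Ideal (𝓞 F)}
    {x : F} (h𝔟 : IsCoprime 𝔟 𝔤) (h : 𝔞 * 𝔟 = spanSingleton (𝓞 F)⁰ x * 𝔞') :
    IsPrimTorsChar 𝔤 𝔞' (fun α => ξ (x * α)) := by
  have hmem : ∀ α ∈ 𝔞', x * α ∈ 𝔞 := fun α hα => mul_mem_of_mul_coeIdeal_eq h hα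
  refine ⟨⟨fun α hα β hβ => ?_, by simpa using hξ.1.2.1, fun α hα γ hγ => ?_⟩, fun 𝔤' h𝔤' => ?_⟩
  · simpa [mul_add] using hξ.1.1 _ (hmem α hα) _ (hmem β hβ)
  · simpa [mul_add] using hξ.1.2.2 _ (hmem α hα) _ (mul_mem_mul_of_mul_coeIdeal_eq h _ hγ)
  · by_contra hcon
    push Not at hcon
    have h𝔤'𝔟 : 𝔤' * 𝔟 ≤ 𝔤 := hξ.le_of_forall_eq_one fun γ hγ => by
      rw [coeIdeal_mul, mul_assoc, mul_comm _ 𝔞, h, mul_left_comm, mem_singleton_mul] at hγ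
      obtain ⟨δ, hδ, rfl⟩ := hγ
      simpa [hξ.1.2.1] using hcon 0 (zero_mem _) δ hδ
    exact h𝔤'.not_ge (Ideal.le_of_dvd (h𝔟.symm.dvd_of_dvd_mul_right (Ideal.dvd_iff_le.mpr h𝔤'𝔟)))

lemma isPrimitive_quotChar (hξ : IsPrimTorsChar 𝔤 𝔞 ξ) {θ : F} (hθ : θ ∈ 𝔞)
    (hgen : ∀ α ∈ 𝔞, ∃ r : 𝓞 F, α - r * θ ∈ (𝔤 : FractionalIdeal (𝓞 F)⁰ F) * 𝔞) :
    (hξ.1.quotChar hθ).IsPrimitive := by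
  intro u hu h1
  obtain ⟨d, rfl⟩ := Ideal.Quotient.mk_surjective u
  refine hu (Ideal.Quotient.eq_zero_iff_mem.mpr (hξ.mem_of_forall_mul_eq_one fun α hα => ?_))
  obtain ⟨r, hr⟩ := hgen α hα
  have h := DFunLike.congr_fun h1 (Ideal.Quotient.mk 𝔤 r)
  rw [AddChar.mulShift_apply, ← map_mul, IsTorsChar.quotChar_mk, AddChar.one_apply] at h
  rw [hξ.1.mul_eq_of_sub_mem hθ hr, h]

lemma exists_isUnit_mul (h𝔤 : 𝔤 ≠ ⊥) (h𝔞 : 𝔞 ≠ 0) {η : F → ℂ} (hη : IsPrimTorsChar 𝔤 𝔞 η)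
    (hξ : IsPrimTorsChar 𝔤 𝔞 ξ) :
    ∃ w : 𝓞 F, IsUnit (Ideal.Quotient.mk 𝔤 w) ∧ ∀ α ∈ 𝔞, ξ α = η (w * α) := by
  obtain ⟨θ, hθ, hgen⟩ := exists_generator_mod h𝔤 h𝔞
  have : Finite (𝓞 F ⧸ 𝔤) := Ring.HasFiniteQuotients.finiteQuotient h𝔤
  obtain ⟨u, hu, hηξ⟩ := AddChar.exists_isUnit_mulShift_eq
    (hη.isPrimitive_quotChar hθ hgen) (hξ.isPrimitive_quotChar hθ hgen)
  obtain ⟨w, rfl⟩ := Ideal.Quotient.mk_surjective u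
  refine ⟨w, hu, fun α hα => ?_⟩
  obtain ⟨r, hr⟩ := hgen α hα
  have h := DFunLike.congr_fun hηξ (Ideal.Quotient.mk 𝔤 r)
  rw [AddChar.mulShift_apply, ← map_mul, IsTorsChar.quotChar_mk, IsTorsChar.quotChar_mk] at h
  rw [hη.1.mul_eq_of_sub_mem hθ hr, h, hξ.1.eq_of_sub_mem (coe_mul_mem r hθ) hr]

end IsPrimTorsChar

lemma mulCongOne_of_mul_le {𝔤 𝔟 : Ideal (𝓞 F)} (h𝔟 : 𝔟 ≠ ⊥) (hcop : IsCoprime 𝔟 𝔤) {y : F}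
    (hy : spanSingleton (𝓞 F)⁰ y * 𝔟 ≤ 1) (hy1 : spanSingleton (𝓞 F)⁰ (y - 1) * 𝔟 ≤ 𝔤) :
    MulCongOne 𝔤 y := by
  obtain ⟨u, hu𝔟, hu0, hu1⟩ := exists_ne_zero_mem_sub_one_mem h𝔟 hcop
  have hu : (u : F) ∈ (𝔟 : FractionalIdeal (𝓞 F)⁰ F) := mem_coeIdeal_of_mem _ hu𝔟
  obtain ⟨a, ha⟩ := (mem_one_iff _).mp (hy (mul_mem_mul (mem_spanSingleton_self _ y) hu))
  replace ha : (a : F) = y * u := ha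
  have hau : a - u ∈ 𝔤 := by
    refine coe_mem_coeIdeal_iff.mp ?_
    rw [show ((a - u : 𝓞 F) : F) = (y - 1) * u by push_cast; linear_combination ha]
    exact hy1 (mul_mem_mul (mem_spanSingleton_self _ _) hu)
  have hu0' : (u : F) ≠ 0 := by exact_mod_cast hu0
  exact ⟨a, u, hu0', by rw [ha, mul_div_cancel_right₀ _ hu0'], by simpa using 𝔤.add_mem hau hu1,
    hu1⟩

variable {𝔤 : Ideal (𝓞 F)} {𝔞 𝔞' : FractionalIdeal (𝓞 F)⁰ F} {ξ ξ' : F → ℂ}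

lemma IsTorsChar.torsRel_mul_span_singleton (hξ : IsTorsChar 𝔤 𝔞 ξ) {β : 𝓞 F}
    (hβ : IsTotPos F β) (hβ1 : β - 1 ∈ 𝔤) :
    TorsRel (𝔞 * (Ideal.span {β} : FractionalIdeal (𝓞 F)⁰ F)) ξ 𝔞 ξ := by
  refine ⟨β, hβ, by rw [coeIdeal_span_singleton, mul_comm], fun α hα => ?_⟩
  refine (hξ.eq_of_sub_mem hα ?_).symm
  simpa [sub_one_mul] using mul_mem_mul (mem_coeIdeal_of_mem _ hβ1) hα

lemma exists_torsRel [Nonempty (F →+* ℝ)] (h𝔤 : 𝔤 ≠ ⊥) (h𝔞 : 𝔞 ≠ 0) (h𝔞' : 𝔞' ≠ 0)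
    (hξ : IsPrimTorsChar 𝔤 𝔞 ξ) (hξ' : IsPrimTorsChar 𝔤 𝔞' ξ') :
    ∃ 𝔟 : Ideal (𝓞 F), 𝔟 ≠ ⊥ ∧ IsCoprime 𝔟 𝔤 ∧
      TorsRel (𝔞 * (𝔟 : FractionalIdeal (𝓞 F)⁰ F)) ξ 𝔞' ξ' := by
  obtain ⟨z, hz0, 𝔠, h𝔠, h𝔞𝔠⟩ := exists_coprime_mul_eq_spanSingleton_mul h𝔤 h𝔞 h𝔞'
  have hη := hξ.comp_mul h𝔠 h𝔞𝔠
  obtain ⟨w, hw, hξ'w⟩ := hη.exists_isUnit_mul h𝔤 h𝔞' hξ'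
  obtain ⟨t, htw, ht⟩ := exists_sub_mem_isTotPos_mul h𝔤 hz0 w
  have h𝔟 : 𝔞 * ((𝔠 * Ideal.span {t} : Ideal (𝓞 F)) : FractionalIdeal (𝓞 F)⁰ F) =
      spanSingleton (𝓞 F)⁰ (z * t) * 𝔞' := by
    rw [coeIdeal_mul, ← mul_assoc, h𝔞𝔠, coeIdeal_span_singleton,
      ← spanSingleton_mul_spanSingleton, mul_right_comm]
  refine ⟨𝔠 * Ideal.span {t}, fun h => ?_, h𝔠.mul_left (isCoprime_span_singleton_of_isUnit_mk ?_),
    z * t, ht, h𝔟, fun α hα => ?_⟩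
  · rw [h, coeIdeal_bot, mul_zero] at h𝔟
    exact mul_ne_zero (spanSingleton_ne_zero_iff.mpr ht.ne_zero) h𝔞' h𝔟.symm
  · rwa [Ideal.Quotient.eq.mpr htw]
  · rw [hξ'w α hα, mul_assoc]
    refine (hη.1.eq_of_sub_mem (coe_mul_mem w hα) ?_).symm
    rw [← sub_mul]
    exact mul_mem_mul (by exact_mod_cast mem_coeIdeal_of_mem _ htw) hα

lemma exists_mulCongOne_of_torsRel [Nonempty (F →+* ℝ)] (h𝔞 : 𝔞 ≠ 0)
    (hξ : IsPrimTorsChar 𝔤 𝔞 ξ) {𝔟 𝔟' : Ideal (𝓞 F)} (h𝔟 : 𝔟 ≠ ⊥) (hcop : IsCoprime 𝔟 𝔤)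
    (hT : TorsRel (𝔞 * (𝔟 : FractionalIdeal (𝓞 F)⁰ F)) ξ 𝔞' ξ')
    (hT' : TorsRel (𝔞 * (𝔟' : FractionalIdeal (𝓞 F)⁰ F)) ξ 𝔞' ξ') :
    ∃ y : F, IsTotPos F y ∧ MulCongOne 𝔤 y ∧
      (𝔟' : FractionalIdeal (𝓞 F)⁰ F) = spanSingleton (𝓞 F)⁰ y * 𝔟 := by
  obtain ⟨x, hx, h𝔟x, hξx⟩ := hT
  obtain ⟨x', hx', h𝔟x', hξx'⟩ := hT'
  have h𝔟' : (𝔟' : FractionalIdeal (𝓞 F)⁰ F) = spanSingleton (𝓞 F)⁰ (x' / x) * 𝔟 := by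
    refine mul_left_cancel₀ h𝔞 ?_
    rw [h𝔟x', mul_left_comm, h𝔟x, ← mul_assoc, spanSingleton_mul_spanSingleton,
      div_mul_cancel₀ _ hx.ne_zero]
  have hle : spanSingleton (𝓞 F)⁰ (x' / x - 1) * 𝔟 ≤ 1 := by
    refine spanSingleton_mul_le_iff.mpr fun b hb => ?_
    rw [sub_mul, one_mul]
    exact Submodule.sub_mem _
      (coeIdeal_le_one (h𝔟' ▸ mul_mem_mul (mem_spanSingleton_self _ _) hb)) (coeIdeal_le_one hb)
  refine ⟨x' / x, hx'.div hx, mulCongOne_of_mul_le h𝔟 hcop (h𝔟' ▸ coeIdeal_le_one)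
    (hξ.le_coeIdeal_of_forall_eq_one hle fun γ hγ => ?_), h𝔟'⟩
  -- `(x'/x - 1) 𝔟 𝔞 = (x' - x) 𝔞'`
  rw [mul_assoc, mul_comm _ 𝔞, h𝔟x, ← mul_assoc, spanSingleton_mul_spanSingleton,
    show (x' / x - 1) * x = x' - x by field_simp [hx.ne_zero], mem_singleton_mul] at hγ
  obtain ⟨α, hα, rfl⟩ := hγ
  rw [sub_mul]
  exact hξ.1.sub_eq_one (mul_mem_of_mul_coeIdeal_eq h𝔟x' hα) (mul_mem_of_mul_coeIdeal_eq h𝔟x hα)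
    (by rw [← hξx α hα, ← hξx' α hα])

end

/-- **The narrow ray class group acts simply transitively on `𝒯_0[𝔤]`.**
For a totally real field `F` and a nonzero integral ideal `𝔤`, the action
`𝔟 ↦ (ξ ↦ ξ^𝔟)` (restriction of `ξ` along `𝔞𝔟 ⊆ 𝔞`) on the set of `F_+^×`-orbits of
primitive `𝔤`-torsion points is well defined — principal ideals `(β)` with `β` totally
positive and `β ≡ 1 mod 𝔤` act trivially — and simply transitive. -/
theorem ray_class_action_on_primitive_torsion_simply_transitive
    (F : Type*) [Field F] [NumberField F]
    (htr : ∀ v : NumberField.InfinitePlace F, v.IsReal)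
    (𝔤 : Ideal (𝓞 F)) (h𝔤 : 𝔤 ≠ ⊥) :
    -- well-definedness: totally positive `β ≡ 1 mod 𝔤` acts trivially
    (∀ (𝔞 : FractionalIdeal (𝓞 F)⁰ F) (ξ : F → ℂ), 𝔞 ≠ 0 → IsPrimTorsChar 𝔤 𝔞 ξ →
      ∀ β : 𝓞 F, IsTotPos F (β : F) → β - 1 ∈ 𝔤 →
        TorsRel (𝔞 * (Ideal.span {β} : FractionalIdeal (𝓞 F)⁰ F)) ξ 𝔞 ξ) ∧
    -- transitivity
    (∀ (𝔞 𝔞' : FractionalIdeal (𝓞 F)⁰ F) (ξ ξ' : F → ℂ), 𝔞 ≠ 0 → 𝔞' ≠ 0 →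
      IsPrimTorsChar 𝔤 𝔞 ξ → IsPrimTorsChar 𝔤 𝔞' ξ' →
      ∃ 𝔟 : Ideal (𝓞 F), 𝔟 ≠ ⊥ ∧ IsCoprime 𝔟 𝔤 ∧
        TorsRel (𝔞 * (𝔟 : FractionalIdeal (𝓞 F)⁰ F)) ξ 𝔞' ξ') ∧
    -- uniqueness: the acting class is unique in `Cl_F^+(𝔤)`
    (∀ (𝔞 𝔞' : FractionalIdeal (𝓞 F)⁰ F) (ξ ξ' : F → ℂ), 𝔞 ≠ 0 → 𝔞' ≠ 0 →
      IsPrimTorsChar 𝔤 𝔞 ξ → IsPrimTorsChar 𝔤 𝔞' ξ' →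
      ∀ 𝔟 𝔟' : Ideal (𝓞 F), 𝔟 ≠ ⊥ → 𝔟' ≠ ⊥ → IsCoprime 𝔟 𝔤 → IsCoprime 𝔟' 𝔤 →
        TorsRel (𝔞 * (𝔟 : FractionalIdeal (𝓞 F)⁰ F)) ξ 𝔞' ξ' →
        TorsRel (𝔞 * (𝔟' : FractionalIdeal (𝓞 F)⁰ F)) ξ 𝔞' ξ' →
        ∃ x : F, IsTotPos F x ∧ MulCongOne 𝔤 x ∧
          (𝔟' : FractionalIdeal (𝓞 F)⁰ F) =
            spanSingleton (𝓞 F)⁰ x * (𝔟 : FractionalIdeal (𝓞 F)⁰ F)) := by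
  obtain ⟨v⟩ : Nonempty (InfinitePlace F) := inferInstance
  have : Nonempty (F →+* ℝ) := ⟨v.embedding_of_isReal (htr v)⟩
  exact ⟨fun _ _ _ hξ _ hβ hβ1 => hξ.1.torsRel_mul_span_singleton hβ hβ1,
    fun _ _ _ _ h𝔞 h𝔞' hξ hξ' => exists_torsRel h𝔤 h𝔞 h𝔞' hξ hξ',
    fun 𝔞 _ ξ _ h𝔞 _ hξ _ _ _ h𝔟 _ hcop _ hT hT' =>
      exists_mulCongOne_of_torsRel h𝔞 hξ h𝔟 hcop hT hT'⟩
end
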